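/- arXiv:1610.10050 — 4 statements merged into one kernel-verified Lean document; each statement's English description precedes it below -/
import Mathlib

section
/- For every natural number n ≥ 1, the choreography extracted from the network N_n, consisting of n independent pairs where one process is a conditional on the other, contains exactly 2^n - 1 conditional terms. -/
/-- The choreography extracted from the network `N_n` of `n` independent
conditional pairs contains exactly `2^n - 1` conditionals: if
`f 0 = 0` and `f (n+1) = 1 + 2 * f n`, then `f n = 2^n - 1` for `n ≥ 1`. -/
theorem extracted_conditionals (f : ℕ → ℕ) (h0 : f 0 = 0)
    (hrec : ∀ n, f (n + 1) = 1 + 2 * f n) :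
    ∀ n, 1 ≤ n → f n = 2 ^ n - 1 := by
  intro n _
  induction n with
  | zero => simpa using h0
  | succ k ih =>
    rcases Nat.eq_zero_or_pos k with hk | hk
    · subst hk; simp [hrec, h0]
    · rw [hrec, ih hk]
      have : 1 ≤ 2 ^ k := Nat.one_le_two_pow
      omega
end

section
/- If every non-terminal vertex of a finite directed graph G has out-degree at least 1, and for every vertex v reachable from a start vertex s and every process index i there exists a path from v to a vertex where process i can act, then there exists a subgraph (SEG) containing s in which every cycle passes through a distinguished ('all-white') vertex. -/
/-!
Let `d v` be the length of a shortest `E`-path from `v` to a white vertex, and keep an edge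
`a → b` of `E` when `a` is white or `d b < d a`. A reachable non-white vertex still has its
successor on a shortest path to white, so no reachable non-terminal vertex loses all its
edges; and around a cycle without white vertices `d` would strictly decrease all the way.
-/

open Relation

namespace List

theorem IsChain.exists_mem_of_cycle {α β : Type*} [Preorder β] {r : α → α → Prop}
    {p : α → Prop} (f : α → β) (hf : ∀ a b, r a b → ¬ p a → f b < f a) {v : α} {l : List α}
    (hl : (v :: l).IsChain r) (hcyc : r ((v :: l).getLast (cons_ne_nil v l)) v) :
    ∃ a ∈ v :: l, p a := by
  by_contra! hnp
  let r' a b := r a b ∧ ¬ p a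
  have hl' : (v :: l).IsChain r' :=
    (IsChain.iff_mem.mp hl).imp fun a _ ⟨ha, _, hab⟩ => ⟨hab, hnp a ha⟩
  have hloop : TransGen r' v v :=
    TransGen.tail' (relationReflTransGen_of_exists_isChain_cons l hl' rfl)
      ⟨hcyc, hnp _ (getLast_mem _)⟩
  have hlt : TransGen (· > ·) (f v) (f v) :=
    hloop.lift f fun a b hab => hf a b hab.1 hab.2
  rw [transGen_eq_self] at hlt
  exact lt_irrefl _ hlt

end List

section DistTo

variable {α : Type*} (r : α → α → Prop) (p : α → Prop)

def pathLengthsTo (a : α) : Set ℕ :=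
  {n | ∃ l : List α, l.length = n ∧ (a :: l).IsChain r ∧
    p ((a :: l).getLast (List.cons_ne_nil a l))}

-- `0` (as `sInf ∅`) when no `p`-vertex is reachable from `a`.
noncomputable def distTo (a : α) : ℕ := sInf (pathLengthsTo r p a)

variable {r p}

theorem pathLengthsTo_nonempty {a b : α} (hab : ReflTransGen r a b) (hb : p b) :
    (pathLengthsTo r p a).Nonempty := by
  obtain ⟨l, hl, hlast⟩ := List.exists_isChain_cons_of_relationReflTransGen hab
  exact ⟨l.length, l, rfl, hl, hlast ▸ hb⟩

theorem exists_rel_distTo_lt {a : α} (h : (pathLengthsTo r p a).Nonempty) (ha : ¬ p a) :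
    ∃ b, r a b ∧ distTo r p b < distTo r p a := by
  obtain ⟨l, hlen, hl, hlast⟩ := Nat.sInf_mem h
  cases l with
  | nil => exact absurd hlast ha
  | cons b t =>
    obtain ⟨hab, hbt⟩ := List.isChain_cons_cons.mp hl
    have hb : t.length ∈ pathLengthsTo r p b :=
      ⟨t, rfl, hbt, by rwa [List.getLast_cons_cons] at hlast⟩
    refine ⟨b, hab, ?_⟩
    calc distTo r p b ≤ t.length := Nat.sInf_le hb
      _ < distTo r p a := (Nat.lt_succ_self _).trans_eq hlen

end DistTo

theorem valid_seg_exists_general {V : Type*}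
    (E : V → V → Prop) (white terminal : V → Prop) (s : V)
    (hdeg : ∀ v, ¬ terminal v → ∃ w, E v w)
    (hfair : ∀ v, Relation.ReflTransGen E s v →
      ∃ w, Relation.ReflTransGen E v w ∧ white w) :
    ∃ E' : V → V → Prop,
      (∀ a b, E' a b → E a b) ∧
      (∀ v, Relation.ReflTransGen E' s v → ¬ terminal v → ∃ w, E' v w) ∧
      (∀ (v : V) (l : List V), List.Chain E' v l →
        E' ((v :: l).getLast (List.cons_ne_nil v l)) v →
        white v ∨ ∃ w ∈ l, white w) := by
  let d := distTo E white
  refine ⟨fun a b => E a b ∧ (¬ white a → d b < d a), fun a b h => h.1, ?_, ?_⟩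
  · intro v hv hterm
    by_cases hw : white v
    · obtain ⟨w, hvw⟩ := hdeg v hterm
      exact ⟨w, hvw, absurd hw⟩
    · obtain ⟨w, hvw, hww⟩ := hfair v (ReflTransGen.mono (fun _ _ h => h.1) _ _ hv)
      obtain ⟨b, hvb, hlt⟩ := exists_rel_distTo_lt (pathLengthsTo_nonempty hvw hww) hw
      exact ⟨b, hvb, fun _ => hlt⟩
  · intro v l hl hcyc
    simpa using List.IsChain.exists_mem_of_cycle d (fun _ _ h => h.2) hl hcyc

/-- Existence of a valid SEG (abstract version of Theorem 4): in a finite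
directed graph in which every non-terminal vertex has a successor and from
every vertex reachable from `s` some all-white vertex is reachable, there is
a subgraph containing `s`, still total on reachable non-terminal vertices,
all of whose cycles pass through a white vertex. -/
theorem valid_seg_exists {V : Type*} [Fintype V]
    (E : V → V → Prop) (white terminal : V → Prop) (s : V)
    (hdeg : ∀ v, ¬ terminal v → ∃ w, E v w)
    (hfair : ∀ v, Relation.ReflTransGen E s v →
      ∃ w, Relation.ReflTransGen E v w ∧ white w) :
    ∃ E' : V → V → Prop,
      (∀ a b, E' a b → E a b) ∧
      (∀ v, Relation.ReflTransGen E' s v → ¬ terminal v → ∃ w, E' v w) ∧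
      (∀ (v : V) (l : List V), List.Chain E' v l →
        E' ((v :: l).getLast (List.cons_ne_nil v l)) v →
        white v ∨ ∃ w ∈ l, white w) :=
  valid_seg_exists_general E white terminal s hdeg hfair
end

section
/- Encoding top-level procedure definitions into nested recursion can cause exponential blow-up: for the encoding ⟦∅, C⟧ = C and ⟦{X = C_X} ∪ D, C⟧ = def X = ⟦D, C_X⟧ in ⟦D, C⟧, the size of ⟦D, C⟧ where D has k definitions each of body size s and |C| = s is at least 2^k · s. -/
/-- Exponential blow-up of the encoding of top-level definitions: if
`E k` is the size of the encoding with `k` remaining definitions, all bodies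
and the continuation having size `s` (so `E 0 = s` and
`E (k+1) = 1 + E k + E k`), then `E k ≥ 2^k * s`. -/
theorem encoding_blowup (E : ℕ → ℕ) (s : ℕ)
    (h0 : E 0 = s) (hrec : ∀ k, E (k + 1) = 1 + E k + E k) :
    ∀ k, 2 ^ k * s ≤ E k := by
  intro k
  induction k with
  | zero => simp [h0]
  | succ n ih => rw [hrec, pow_succ]; nlinarith
end

section
/- Iterative least-fixed-point saturation is correct: given a finite set A, an element x ∈ A, and a function step : A → Finset A, the worklist algorithm starting from waiting = {x}, actions = ∅, which repeatedly moves an element y from waiting to actions and adds step(y) \ actions to waiting, terminates and returns the smallest subset S ⊆ A with x ∈ S and (∀ y ∈ S, step(y) ⊆ S). -/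
/-!
Write `a` for the processed elements and `w` for the waiting ones. A step moving `y ∈ w` into `a`
replaces `a ∪ w` by `a ∪ w ∪ step y`, and keeps `a` and `w` disjoint. Hence `a ∪ w` always contains
`x`, lies in `A`, lies in every `step`-closed set containing `x`, and the `step`-image of `a` stays
inside it. While `w` is nonempty `a` grows strictly inside `A`, so `w` eventually empties; then
`a ∪ w = a` is the least `step`-closed set containing `x`.
-/

open Finset

theorem exists_not_of_card_lt_card_succ {α : Type*} {s : ℕ → Finset α} {A : Finset α}
    (hA : ∀ t, s t ⊆ A) {p : ℕ → Prop} (hp : ∀ t, p t → #(s t) < #(s (t + 1))) :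
    ∃ t, ¬ p t := by
  by_contra! h
  have hgrow : ∀ t, t ≤ #(s t) := by
    intro t
    induction t with
    | zero => exact Nat.zero_le _
    | succ t ih => exact Nat.succ_le_of_lt (ih.trans_lt (hp t (h t)))
  have := (hgrow (#A + 1)).trans (card_le_card (hA _))
  omega

section Worklist

variable {α : Type*} [DecidableEq α] (step : α → Finset α)

theorem insert_union_erase_union_sdiff {a w : Finset α} {y : α} (hy : y ∈ w) :
    insert y a ∪ (w.erase y ∪ (step y \ insert y a)) = a ∪ w ∪ step y := by
  ext z
  simp only [mem_union, mem_insert, mem_erase, mem_sdiff]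
  by_cases hzy : z = y
  · subst hzy; tauto
  · tauto

structure WorklistInv (A : Finset α) (x : α) (a w : Finset α) : Prop where
  disjoint : Disjoint a w
  subset : a ∪ w ⊆ A
  mem : x ∈ a ∪ w
  step_subset : ∀ y ∈ a, step y ⊆ a ∪ w
  subset_of_closed : ∀ S : Finset α, x ∈ S → (∀ y ∈ S, step y ⊆ S) → a ∪ w ⊆ S

variable {step} {A : Finset α} {x : α}

theorem WorklistInv.initial (hx : x ∈ A) : WorklistInv step A x ∅ {x} where
  disjoint := disjoint_empty_left _
  subset := by simpa using hx
  mem := by simp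
  step_subset := by simp
  subset_of_closed S hxS _ := by simpa using hxS

theorem WorklistInv.insert {a w : Finset α} (h : WorklistInv step A x a w)
    (hstep : ∀ y ∈ A, step y ⊆ A) {y : α} (hy : y ∈ w) :
    WorklistInv step A x (insert y a) (w.erase y ∪ (step y \ insert y a)) := by
  have hyA : y ∈ A := h.subset (mem_union_right _ hy)
  have hunion := insert_union_erase_union_sdiff step (a := a) hy
  refine ⟨?_, ?_, ?_, ?_, ?_⟩ <;> try rw [hunion]
  · rw [disjoint_union_right, disjoint_insert_left]
    exact ⟨⟨notMem_erase y w, h.disjoint.mono_right (erase_subset y w)⟩, disjoint_sdiff⟩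
  · exact union_subset h.subset (hstep y hyA)
  · exact subset_union_left h.mem
  · intro z hz
    rcases mem_insert.mp hz with rfl | hz
    · exact subset_union_right
    · exact (h.step_subset z hz).trans subset_union_left
  · intro S hxS hS
    have haw := h.subset_of_closed S hxS hS
    exact union_subset haw (hS y (haw (mem_union_right _ hy)))

theorem WorklistInv.notMem_of_mem_waiting {a w : Finset α} (h : WorklistInv step A x a w)
    {y : α} (hy : y ∈ w) : y ∉ a :=
  fun hya => disjoint_left.mp h.disjoint hya hy

theorem WorklistInv.least_closed_of_waiting_empty {a : Finset α} (h : WorklistInv step A x a ∅) :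
    x ∈ a ∧ (∀ y ∈ a, step y ⊆ a) ∧
      ∀ S : Finset α, x ∈ S → (∀ y ∈ S, step y ⊆ S) → a ⊆ S := by
  have hmem := h.mem
  have hstep := h.step_subset
  have hleast := h.subset_of_closed
  simp only [union_empty] at hmem hstep hleast
  exact ⟨hmem, hstep, hleast⟩

end Worklist

/-- Correctness of the worklist saturation algorithm: starting from
`waiting = {x}`, `actions = ∅`, repeatedly moving an element `y` from
`waiting` to `actions` and adding `step y \ actions` to `waiting`, the
algorithm terminates and returns the least subset of `A` containing `x`
and closed under `step`. -/
theorem worklist_saturation_correct {α : Type*} [DecidableEq α]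
    (A : Finset α) (x : α) (hx : x ∈ A)
    (step : α → Finset α) (hstep : ∀ y ∈ A, step y ⊆ A)
    (actions waiting : ℕ → Finset α)
    (h0a : actions 0 = ∅) (h0w : waiting 0 = {x})
    (hrun : ∀ t, (waiting t).Nonempty → ∃ y ∈ waiting t,
      actions (t + 1) = insert y (actions t) ∧
      waiting (t + 1) = (waiting t).erase y ∪ (step y \ actions (t + 1)))
    (hstay : ∀ t, waiting t = ∅ →
      actions (t + 1) = actions t ∧ waiting (t + 1) = ∅) :
    ∃ T, waiting T = ∅ ∧ x ∈ actions T ∧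
      (∀ y ∈ actions T, step y ⊆ actions T) ∧
      ∀ S : Finset α, x ∈ S → (∀ y ∈ S, step y ⊆ S) → actions T ⊆ S := by
  have inv : ∀ t, WorklistInv step A x (actions t) (waiting t) := by
    intro t
    induction t with
    | zero => rw [h0a, h0w]; exact .initial hx
    | succ t ih =>
      rcases (waiting t).eq_empty_or_nonempty with hempty | hne
      · obtain ⟨ha, hw⟩ := hstay t hempty
        rwa [ha, hw, ← hempty]
      · obtain ⟨y, hy, ha, hw⟩ := hrun t hne
        rw [hw, ha]
        exact ih.insert hstep hy
  have hgrow : ∀ t, (waiting t).Nonempty → #(actions t) < #(actions (t + 1)) := by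
    intro t hne
    obtain ⟨y, hy, ha, -⟩ := hrun t hne
    rw [ha, card_insert_of_notMem ((inv t).notMem_of_mem_waiting hy)]
    exact Nat.lt_succ_self _
  obtain ⟨T, hT⟩ := exists_not_of_card_lt_card_succ
    (fun t => subset_union_left.trans (inv t).subset) hgrow
  rw [not_nonempty_iff_eq_empty] at hT
  exact ⟨T, hT, (hT ▸ inv T).least_closed_of_waiting_empty⟩
end
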